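/- Let U ⊆ ℝ⁴ be open and θ : U → M₄(ℝ) a smooth map such that θ(p) is antisymmetric and invertible for every p ∈ U and θ satisfies the Jacobi identity. Then, with ρ := (det θ)^{−1/2} (well defined since det θ > 0 pointwise), for every index μ one has ∑_α ∂_α(ρ θ^{μα}) = 0 on U. (I.e., a nondegenerate Poisson tensor is divergence-free with respect to its Liouville density ρ.) -/

import Mathlib

open Matrix

/-- Partial derivative of `f : ℝ⁴ → ℝ` in the `α`-th coordinate direction at `p`. -/
noncomputable def pderiv4 (f : (Fin 4 → ℝ) → ℝ) (α : Fin 4) (p : Fin 4 → ℝ) : ℝ :=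
  fderiv ℝ f p (Pi.single α 1)

/-- The determinant of a 4×4 antisymmetric matrix is the square of its Pfaffian. -/
lemma det_antisym_fin_four (M : Matrix (Fin 4) (Fin 4) ℝ) (h : Mᵀ = -M) :
    M.det = (M 0 1 * M 2 3 - M 0 2 * M 1 3 + M 0 3 * M 1 2) ^ 2 := by
  have h' : ∀ i j : Fin 4, M j i = -M i j := fun i j => by
    have := congrFun (congrFun h i) j
    simpa [Matrix.transpose_apply] using this
  have e : ∀ i : Fin 4, M i i = 0 := fun i => by have := h' i i; linarith
  simp only [Matrix.det_succ_row_zero, Fin.sum_univ_succ, Fin.sum_univ_zero,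
    Matrix.submatrix_apply, Matrix.det_unique]
  norm_num [Fin.succAbove, Fin.lt_def, Fin.succ, Fin.castSucc, Fin.castAdd, Fin.castLE]
  simp only [show (⟨2, by norm_num⟩ : Fin 4) = 2 from rfl,
    show (⟨3, by norm_num⟩ : Fin 4) = 3 from rfl]
  rw [e 1, e 2, e 3, h' 0 1, h' 0 2, h' 0 3, h' 1 2, h' 1 3, h' 2 3]
  ring

/-- A nondegenerate Poisson tensor `θ^{μν}` on an open `U ⊆ ℝ⁴` is divergence-free with
respect to its Liouville density `ρ = (det θ)^{-1/2}`: `∑_α ∂_α(ρ θ^{μα}) = 0` on `U`. -/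
theorem poisson_divergence_free
    (U : Set (Fin 4 → ℝ)) (hU : IsOpen U)
    (θ : (Fin 4 → ℝ) → Matrix (Fin 4) (Fin 4) ℝ)
    (hθsmooth : ∀ μ ν, ContDiffOn ℝ (⊤ : ℕ∞) (fun p => θ p μ ν) U)
    (hθanti : ∀ p ∈ U, (θ p)ᵀ = -θ p)
    (hθinv : ∀ p ∈ U, IsUnit (θ p))
    (hjacobi : ∀ p ∈ U, ∀ μ ν ρ : Fin 4,
      ∑ α, (θ p α μ * pderiv4 (fun q => θ q ν ρ) α p
        + θ p α ν * pderiv4 (fun q => θ q ρ μ) α p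
        + θ p α ρ * pderiv4 (fun q => θ q μ ν) α p) = 0) :
    ∀ p ∈ U, ∀ μ : Fin 4,
      ∑ α, pderiv4 (fun q => (Real.sqrt (θ q).det)⁻¹ * θ q μ α) α p = 0 := by
  intro p hp μ
  have hpU : U ∈ nhds p := hU.mem_nhds hp
  have hUev : ∀ᶠ q in nhds p, q ∈ U := hpU
  -- differentiability of the entries at p
  have hdiff : ∀ i j : Fin 4, DifferentiableAt ℝ (fun q => θ q i j) p := fun i j =>
    ((hθsmooth i j).contDiffAt hpU).differentiableAt (by simp)
  have hent : ∀ i j : Fin 4, HasFDerivAt (fun q => θ q i j)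
      (fderiv ℝ (fun q => θ q i j) p) p := fun i j => (hdiff i j).hasFDerivAt
  -- the Pfaffian
  set P : (Fin 4 → ℝ) → ℝ := fun q =>
    θ q 0 1 * θ q 2 3 - θ q 0 2 * θ q 1 3 + θ q 0 3 * θ q 1 2 with hPdef
  have hPd : HasFDerivAt P
      ((((θ p 0 1) • fderiv ℝ (fun q => θ q 2 3) p + (θ p 2 3) • fderiv ℝ (fun q => θ q 0 1) p)
        - ((θ p 0 2) • fderiv ℝ (fun q => θ q 1 3) p + (θ p 1 3) • fderiv ℝ (fun q => θ q 0 2) p))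
        + ((θ p 0 3) • fderiv ℝ (fun q => θ q 1 2) p + (θ p 1 2) • fderiv ℝ (fun q => θ q 0 3) p))
      p :=
    (((hent 0 1).mul (hent 2 3)).sub ((hent 0 2).mul (hent 1 3))).add ((hent 0 3).mul (hent 1 2))
  have hdet : ∀ q ∈ U, (θ q).det = (P q) ^ 2 := fun q hq =>
    det_antisym_fin_four (θ q) (hθanti q hq)
  have hPne : P p ≠ 0 := by
    intro h0
    have : (θ p).det ≠ 0 := (Matrix.isUnit_iff_isUnit_det (θ p)).mp (hθinv p hp) |>.ne_zero
    rw [hdet p hp, h0] at this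
    simp at this
  clear_value P
  set s : ℝ := if 0 < P p then 1 else -1 with hsdef
  have hs1 : s = 1 ∨ s = -1 := by
    by_cases h : 0 < P p <;> simp [hsdef, h]
  have hsP : 0 < s * P p := by
    by_cases h : 0 < P p
    · simp [hsdef, h]
    · have : P p < 0 := lt_of_le_of_ne (not_lt.mp h) hPne
      simp only [hsdef, if_neg h]
      nlinarith
  have hsPne : s * P p ≠ 0 := ne_of_gt hsP
  -- sqrt det = s * P near p
  have hsqrt : ∀ᶠ q in nhds p, Real.sqrt (θ q).det = s * P q := by
    have hc : ContinuousAt (fun q => s * P q) p := continuousAt_const.mul hPd.continuousAt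
    have h2 : ∀ᶠ q in nhds p, 0 < s * P q := hc.eventually (eventually_gt_nhds hsP)
    filter_upwards [hUev, h2] with q hqU hq
    rw [hdet q hqU, Real.sqrt_sq_eq_abs]
    rcases hs1 with h | h
    · rw [h] at hq ⊢; rw [abs_of_pos (by linarith)]; ring
    · rw [h] at hq ⊢; rw [abs_of_neg (by linarith)]; ring
  -- value of the partial derivatives of ρ θ^{μ a}
  have hval : ∀ a b : Fin 4,
      pderiv4 (fun q => (Real.sqrt (θ q).det)⁻¹ * θ q μ a) b p
        = (s * P p)⁻¹ * pderiv4 (fun q => θ q μ a) b p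
          - θ p μ a * (((s * P p) ^ 2)⁻¹ * (s * (θ p 0 1 * pderiv4 (fun q => θ q 2 3) b p
            + θ p 2 3 * pderiv4 (fun q => θ q 0 1) b p
            - (θ p 0 2 * pderiv4 (fun q => θ q 1 3) b p
              + θ p 1 3 * pderiv4 (fun q => θ q 0 2) b p)
            + (θ p 0 3 * pderiv4 (fun q => θ q 1 2) b p
              + θ p 1 2 * pderiv4 (fun q => θ q 0 3) b p)))) := by
    intro a b
    have hinv : HasFDerivAt (fun q => (s * P q)⁻¹)
        ((ContinuousLinearMap.smulRight (1 : ℝ →L[ℝ] ℝ) (-((s * P p) ^ 2)⁻¹)).comp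
          (s • (((θ p 0 1) • fderiv ℝ (fun q => θ q 2 3) p
            + (θ p 2 3) • fderiv ℝ (fun q => θ q 0 1) p)
            - ((θ p 0 2) • fderiv ℝ (fun q => θ q 1 3) p
              + (θ p 1 3) • fderiv ℝ (fun q => θ q 0 2) p)
            + ((θ p 0 3) • fderiv ℝ (fun q => θ q 1 2) p
              + (θ p 1 2) • fderiv ℝ (fun q => θ q 0 3) p)))) p :=
      (hasFDerivAt_inv hsPne).comp p (hPd.const_mul s)
    have hg := hinv.mul (hent μ a)
    have heq : (fun q => (Real.sqrt (θ q).det)⁻¹ * θ q μ a)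
        =ᶠ[nhds p] (fun q => (s * P q)⁻¹ * θ q μ a) := by
      filter_upwards [hsqrt] with q hq
      rw [hq]
    have hf := hg.congr_of_eventuallyEq heq
    show fderiv ℝ _ p (Pi.single b 1) = _
    rw [hf.fderiv]
    simp only [pderiv4, ContinuousLinearMap.add_apply, ContinuousLinearMap.smul_apply,
      ContinuousLinearMap.sub_apply, ContinuousLinearMap.comp_apply,
      ContinuousLinearMap.smulRight_apply, ContinuousLinearMap.one_apply, smul_eq_mul]
    ring
  rw [Fin.sum_univ_four, hval 0 0, hval 1 1, hval 2 2, hval 3 3]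
  -- antisymmetry facts
  have htanti : ∀ i j : Fin 4, θ p j i = -θ p i j := fun i j => by
    have := congrFun (congrFun (hθanti p hp) i) j
    simpa [Matrix.transpose_apply] using this
  have htdiag : ∀ i : Fin 4, θ p i i = 0 := fun i => by have := htanti i i; linarith
  have hdanti : ∀ (i j b : Fin 4),
      pderiv4 (fun q => θ q j i) b p = -pderiv4 (fun q => θ q i j) b p := by
    intro i j b
    have hev : (fun q => θ q j i) =ᶠ[nhds p] (fun q => -θ q i j) := by
      filter_upwards [hUev] with q hq
      have := congrFun (congrFun (hθanti q hq) i) j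
      simpa [Matrix.transpose_apply] using this
    simp only [pderiv4]
    rw [hev.fderiv_eq, fderiv_fun_neg]
    simp
  have hddiag : ∀ (i b : Fin 4), pderiv4 (fun q => θ q i i) b p = 0 := fun i b => by
    have := hdanti i i b; linarith
  -- the key algebraic identity from the Jacobi identity
  have J01 := hjacobi p hp μ 0 1
  have J02 := hjacobi p hp μ 0 2
  have J03 := hjacobi p hp μ 0 3
  have J12 := hjacobi p hp μ 1 2
  have J13 := hjacobi p hp μ 1 3
  have J23 := hjacobi p hp μ 2 3
  have hkey : (P p * pderiv4 (fun q => θ q μ 0) 0 p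
        - (θ p 0 1 * pderiv4 (fun q => θ q 2 3) 0 p + θ p 2 3 * pderiv4 (fun q => θ q 0 1) 0 p
          - (θ p 0 2 * pderiv4 (fun q => θ q 1 3) 0 p + θ p 1 3 * pderiv4 (fun q => θ q 0 2) 0 p)
          + (θ p 0 3 * pderiv4 (fun q => θ q 1 2) 0 p + θ p 1 2 * pderiv4 (fun q => θ q 0 3) 0 p))
          * θ p μ 0)
      + (P p * pderiv4 (fun q => θ q μ 1) 1 p
        - (θ p 0 1 * pderiv4 (fun q => θ q 2 3) 1 p + θ p 2 3 * pderiv4 (fun q => θ q 0 1) 1 p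
          - (θ p 0 2 * pderiv4 (fun q => θ q 1 3) 1 p + θ p 1 3 * pderiv4 (fun q => θ q 0 2) 1 p)
          + (θ p 0 3 * pderiv4 (fun q => θ q 1 2) 1 p + θ p 1 2 * pderiv4 (fun q => θ q 0 3) 1 p))
          * θ p μ 1)
      + (P p * pderiv4 (fun q => θ q μ 2) 2 p
        - (θ p 0 1 * pderiv4 (fun q => θ q 2 3) 2 p + θ p 2 3 * pderiv4 (fun q => θ q 0 1) 2 p
          - (θ p 0 2 * pderiv4 (fun q => θ q 1 3) 2 p + θ p 1 3 * pderiv4 (fun q => θ q 0 2) 2 p)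
          + (θ p 0 3 * pderiv4 (fun q => θ q 1 2) 2 p + θ p 1 2 * pderiv4 (fun q => θ q 0 3) 2 p))
          * θ p μ 2)
      + (P p * pderiv4 (fun q => θ q μ 3) 3 p
        - (θ p 0 1 * pderiv4 (fun q => θ q 2 3) 3 p + θ p 2 3 * pderiv4 (fun q => θ q 0 1) 3 p
          - (θ p 0 2 * pderiv4 (fun q => θ q 1 3) 3 p + θ p 1 3 * pderiv4 (fun q => θ q 0 2) 3 p)
          + (θ p 0 3 * pderiv4 (fun q => θ q 1 2) 3 p + θ p 1 2 * pderiv4 (fun q => θ q 0 3) 3 p))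
          * θ p μ 3) = 0 := by
    simp only [hPdef]
    fin_cases μ <;>
    · simp only [show (⟨0, by omega⟩ : Fin 4) = 0 from rfl, show (⟨1, by omega⟩ : Fin 4) = 1 from rfl,
        show (⟨2, by omega⟩ : Fin 4) = 2 from rfl, show (⟨3, by omega⟩ : Fin 4) = 3 from rfl,
        Fin.sum_univ_four, Fin.isValue] at J01 J02 J03 J12 J13 J23 ⊢
      simp only [htdiag, htanti 0 1, htanti 0 2, htanti 0 3, htanti 1 2, htanti 1 3, htanti 2 3,
        hddiag, hdanti 0 1, hdanti 0 2, hdanti 0 3, hdanti 1 2, hdanti 1 3, hdanti 2 3]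
        at J01 J02 J03 J12 J13 J23 ⊢
      linear_combination (θ p 2 3) * J01 - (θ p 1 3) * J02 + (θ p 1 2) * J03
        + (θ p 0 3) * J12 - (θ p 0 2) * J13 + (θ p 0 1) * J23
  have hc : (s * P p)⁻¹ = ((s * P p) ^ 2)⁻¹ * (s * P p) := by
    symm
    rw [sq, _root_.mul_inv_rev, mul_assoc, inv_mul_cancel₀ hsPne, mul_one]
  linear_combination (((s * P p) ^ 2)⁻¹ * s) * hkey
    + (pderiv4 (fun q => θ q μ 0) 0 p + pderiv4 (fun q => θ q μ 1) 1 p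
      + pderiv4 (fun q => θ q μ 2) 2 p + pderiv4 (fun q => θ q μ 3) 3 p) * hc
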